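/- arXiv:2009.11319 — 2 statements merged into one kernel-verified Lean document; each statement's English description precedes it below -/
import Mathlib

section
/- Characterisation of centres of spin relative to the Newton–Wigner position (algebraic core): Let P ∈ ℝ⁴ be future-directed timelike with mc := √(−η(P,P)) and u ∈ ℝ⁴ future-directed unit timelike. For D ∈ ℝ⁴, the covector ι_{u+P/(mc)}(D^♭ ∧ P^♭), whose components are (η(D,u) + η(D,P)/(mc)) P_μ − (η(P,u) − mc) D_μ, lies in the span of u^♭ − P^♭/(mc) if and only if D ∈ span{u, P}. (Note η(P,u) − mc < 0 automatically, since η(u,P) ≤ −mc.) -/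
noncomputable section

open scoped BigOperators

/-- The Minkowski bilinear form on `ℝ⁴`, signature `(-+++)`. -/
def mink (x y : Fin 4 → ℝ) : ℝ := -(x 0 * y 0) + x 1 * y 1 + x 2 * y 2 + x 3 * y 3

/-- Lowering (equivalently raising) an index with `η = diag(-1,1,1,1)`. -/
def low (v : Fin 4 → ℝ) : Fin 4 → ℝ := fun μ => if μ = 0 then -(v μ) else v μ

/-- `v` is future-directed timelike. -/
def FDTimelike (v : Fin 4 → ℝ) : Prop := mink v v < 0 ∧ 0 < v 0

/-- `v` is future-directed unit timelike. -/
def FDUnitTimelike (v : Fin 4 → ℝ) : Prop := mink v v = -1 ∧ 0 < v 0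

/-- `mc := √(−η(P,P))`. -/
def mcOf (P : Fin 4 → ℝ) : ℝ := Real.sqrt (-(mink P P))

/-- The spin tensor `S_{μν}(x) = J_{μν} − x_μ P_ν + x_ν P_μ` about the point `x`. -/
def spinTensor (J : Fin 4 → Fin 4 → ℝ) (P x : Fin 4 → ℝ) : Fin 4 → Fin 4 → ℝ :=
  fun μ ν => J μ ν - low x μ * low P ν + low x ν * low P μ

/-- The spin supplementary condition `S_{μν}(x) f^ν = 0` with respect to `f`. -/
def SSC (J : Fin 4 → Fin 4 → ℝ) (P x f : Fin 4 → ℝ) : Prop :=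
  ∀ μ, ∑ ν, spinTensor J P x μ ν * f ν = 0

/-- Lowered components of the Newton–Wigner position observable. -/
def nwLow (J : Fin 4 → Fin 4 → ℝ) (P u : Fin 4 → ℝ) (τ : ℝ) : Fin 4 → ℝ :=
  fun μ =>
    -(∑ ρ, J μ ρ * (u ρ + P ρ / mcOf P)) / (mcOf P - mink u P)
    + τ * low P μ / (-(mink u P))
    - ((∑ l, ∑ ρ, J l ρ * u l * P ρ) / (mcOf P * (mcOf P - mink u P)))
        * low P μ / (-(mink u P))

/-- The Newton–Wigner position observable (as a point of `ℝ⁴`). -/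
def nw (J : Fin 4 → Fin 4 → ℝ) (P u : Fin 4 → ℝ) (τ : ℝ) : Fin 4 → ℝ :=
  low (nwLow J P u τ)

/-!
Write `α = η(D,u) + η(D,P)/mc` and `β = η(P,u) - mc`, which is negative because two
future-directed timelike vectors have negative product. Lowering indices is a linear
isomorphism, so the question is whether `α P - β D` is a multiple of `u - P/mc`. If it is,
`β ≠ 0` lets one solve for `D` inside `span{u, P}`. Conversely, for `D = a u + b P` one finds
`α = β (b + a/mc)`, and then `α P - β D = -β a (u - P/mc)`.
-/

theorem mink_comm (x y : Fin 4 → ℝ) : mink x y = mink y x := by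
  simp only [mink]; ring

theorem mink_smul_add_smul_left (a b : ℝ) (x y z : Fin 4 → ℝ) :
    mink (a • x + b • y) z = a * mink x z + b * mink y z := by
  simp only [mink, Pi.add_apply, Pi.smul_apply, smul_eq_mul]; ring

theorem FDTimelike.mink_neg {u v : Fin 4 → ℝ} (hu : FDTimelike u) (hv : FDTimelike v) :
    mink u v < 0 := by
  obtain ⟨huu, hu0⟩ := hu
  obtain ⟨hvv, hv0⟩ := hv
  simp only [mink] at huu hvv ⊢
  -- reverse Cauchy–Schwarz: `|u⃗ · v⃗| ≤ |u⃗| |v⃗| < u⁰ v⁰`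
  nlinarith [sq_nonneg (u 1 * v 2 - u 2 * v 1), sq_nonneg (u 1 * v 3 - u 3 * v 1),
    sq_nonneg (u 2 * v 3 - u 3 * v 2), mul_pos hu0 hv0,
    sq_nonneg (u 1 * v 1 + u 2 * v 2 + u 3 * v 3 + u 0 * v 0)]

theorem FDUnitTimelike.fdTimelike {u : Fin 4 → ℝ} (hu : FDUnitTimelike u) : FDTimelike u :=
  ⟨hu.1 ▸ neg_one_lt_zero, hu.2⟩

theorem FDTimelike.mcOf_pos {P : Fin 4 → ℝ} (hP : FDTimelike P) : 0 < mcOf P :=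
  Real.sqrt_pos.mpr (neg_pos.mpr hP.1)

theorem FDTimelike.mcOf_sq {P : Fin 4 → ℝ} (hP : FDTimelike P) : mcOf P ^ 2 = -mink P P :=
  Real.sq_sqrt (neg_nonneg.mpr hP.1.le)

def lowEquiv : (Fin 4 → ℝ) ≃ₗ[ℝ] (Fin 4 → ℝ) where
  toFun := low
  invFun := low
  map_add' x y := by ext μ; by_cases h : μ = 0 <;> simp [low, h, add_comm]
  map_smul' c x := by ext μ; by_cases h : μ = 0 <;> simp [low, h]
  left_inv x := by ext μ; by_cases h : μ = 0 <;> simp [low, h]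
  right_inv x := by ext μ; by_cases h : μ = 0 <;> simp [low, h]

theorem LinearEquiv.apply_mem_span_singleton_iff {R M N : Type*} [Semiring R]
    [AddCommMonoid M] [AddCommMonoid N] [Module R M] [Module R N] (e : M ≃ₗ[R] N) {x y : M} :
    e x ∈ Submodule.span R {e y} ↔ x ∈ Submodule.span R {y} := by
  simp only [Submodule.mem_span_singleton, ← map_smul, e.injective.eq_iff]

theorem mem_span_pair_of_smul_sub_smul_mem {K V : Type*} [Field K] [AddCommGroup V] [Module K V]
    {u v w x : V} {a b : K} (hb : b ≠ 0) (hw : w ∈ Submodule.span K {u, v})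
    (h : a • v - b • x ∈ Submodule.span K {w}) : x ∈ Submodule.span K {u, v} := by
  set S := Submodule.span K {u, v}
  have hv : v ∈ S := Submodule.subset_span (by simp)
  have hx : a • v - b • x ∈ S := Submodule.span_singleton_le_iff_mem _ _ |>.mpr hw h
  have : x = b⁻¹ • (a • v - (a • v - b • x)) := by
    rw [sub_sub_cancel, smul_smul, inv_mul_cancel₀ hb, one_smul]
  rw [this]
  exact S.smul_mem _ (S.sub_mem (S.smul_mem _ hv) hx)

theorem mink_add_mink_div_eq {u P : Fin 4 → ℝ} {m : ℝ} (hu : mink u u = -1)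
    (hm : m ^ 2 = -mink P P) (hm0 : m ≠ 0) (a b : ℝ) :
    mink (a • u + b • P) u + mink (a • u + b • P) P / m = (mink P u - m) * (b + a / m) := by
  rw [mink_smul_add_smul_left, mink_smul_add_smul_left, hu, mink_comm u P]
  field_simp
  linear_combination b * hm

/-- **Characterisation of centres of spin relative to the Newton–Wigner position (algebraic
core)**: the covector `ι_{u+P/(mc)}(D^♭∧P^♭)`, with components
`(η(D,u)+η(D,P)/(mc))P_μ − (η(P,u)−mc)D_μ`, lies in the span of `u^♭ − P^♭/(mc)` iff
`D ∈ span{u,P}`. -/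
theorem interior_wedge_in_span_iff_mem_span
    (P : Fin 4 → ℝ) (hP : FDTimelike P)
    (u : Fin 4 → ℝ) (hu : FDUnitTimelike u)
    (D : Fin 4 → ℝ) :
    ((fun μ => (mink D u + mink D P / mcOf P) * low P μ - (mink P u - mcOf P) * low D μ)
        ∈ Submodule.span ℝ ({fun μ => low u μ - low P μ / mcOf P} : Set (Fin 4 → ℝ)))
    ↔ D ∈ Submodule.span ℝ ({u, P} : Set (Fin 4 → ℝ)) := by
  set m := mcOf P
  have hm : 0 < m := hP.mcOf_pos
  have hβ : mink P u - m ≠ 0 := by linarith [hP.mink_neg hu.fdTimelike]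
  have hcov : (fun μ => (mink D u + mink D P / m) * low P μ - (mink P u - m) * low D μ) =
      lowEquiv ((mink D u + mink D P / m) • P - (mink P u - m) • D) := by
    rw [map_sub, map_smul, map_smul]; rfl
  have hw : (fun μ => low u μ - low P μ / m) = lowEquiv (u - m⁻¹ • P) := by
    rw [map_sub, map_smul]; ext μ; simp [lowEquiv, div_eq_inv_mul]
  rw [hcov, hw, lowEquiv.apply_mem_span_singleton_iff]
  constructor
  · refine mem_span_pair_of_smul_sub_smul_mem hβ ?_
    exact Submodule.sub_mem _ (Submodule.subset_span (by simp))
      (Submodule.smul_mem _ _ (Submodule.subset_span (by simp)))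
  · intro hD
    obtain ⟨a, b, rfl⟩ := Submodule.mem_span_pair.mp hD
    rw [mink_add_mink_div_eq hu.1 hP.mcOf_sq hm.ne', Submodule.mem_span_singleton]
    exact ⟨-((mink P u - m) * a), by module⟩
end
end

section
/- The SSC position observable is the unique intersection of the SSC worldline with a spacelike hyperplane: Let P ∈ ℝ⁴ be future-directed timelike, J_{μν} antisymmetric, f ∈ ℝ⁴ future-directed timelike, u ∈ ℝ⁴ future-directed unit timelike, and τ ∈ ℝ. Then the point χ(u,τ) with components χ_μ(u,τ) := J_{μρ}f^ρ/(f·P) + τP_μ/(−u·P) − [J_{λρ}u^λf^ρ/(−f·P)]·P_μ/(−u·P) is the unique x ∈ ℝ⁴ satisfying both η(u,x) = −τ and (J_{μν} − x_μP_ν + x_νP_μ) f^ν = 0 for all μ. -/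
noncomputable section

open scoped BigOperators

/-- Lowered components of the SSC position observable on the spacelike hyperplane with unit
normal `u` and distance `τ`:
`χ_μ(u,τ) = J_{μρ}f^ρ/(f·P) + τP_μ/(−u·P) − [J_{λρ}u^λf^ρ/(−f·P)]·P_μ/(−u·P)`. -/
def sscPosLow (J : Fin 4 → Fin 4 → ℝ) (P f u : Fin 4 → ℝ) (τ : ℝ) : Fin 4 → ℝ :=
  fun μ =>
    (∑ ρ, J μ ρ * f ρ) / mink f P
    + τ * low P μ / (-(mink u P))
    - ((∑ l, ∑ ρ, J l ρ * u l * f ρ) / (-(mink f P))) * (low P μ / (-(mink u P)))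

/-- The SSC position observable (as a point of `ℝ⁴`). -/
def sscPos (J : Fin 4 → Fin 4 → ℝ) (P f u : Fin 4 → ℝ) (τ : ℝ) : Fin 4 → ℝ :=
  low (sscPosLow J P f u τ)


set_option maxHeartbeats 1000000 in
lemma low_zero' (v : Fin 4 → ℝ) : low v 0 = -(v 0) := by simp [low]
lemma low_one' (v : Fin 4 → ℝ) : low v 1 = v 1 := by simp [low]
lemma low_two' (v : Fin 4 → ℝ) : low v 2 = v 2 := by simp [low]
lemma low_three' (v : Fin 4 → ℝ) : low v 3 = v 3 := by simp [low]

lemma low_low' (v : Fin 4 → ℝ) : low (low v) = v := by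
  funext μ; simp only [low]; split <;> ring

lemma mink_neg' (v w : Fin 4 → ℝ) (hv : mink v v < 0) (hv0 : 0 < v 0)
    (hw : mink w w < 0) (hw0 : 0 < w 0) : mink v w < 0 := by
  simp only [mink] at *
  nlinarith [sq_nonneg (v 1 * w 2 - v 2 * w 1), sq_nonneg (v 1 * w 3 - v 3 * w 1),
    sq_nonneg (v 2 * w 3 - v 3 * w 2), mul_pos hv0 hw0,
    sq_nonneg (v 0 * w 0 + (v 1 * w 1 + v 2 * w 2 + v 3 * w 3)),
    sq_nonneg (v 0 * w 0 - (v 1 * w 1 + v 2 * w 2 + v 3 * w 3))]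

lemma key' (A B S P' C τ x' E : ℝ) (hA : A ≠ 0) (hB : B ≠ 0)
    (h1 : S - x' * A + E * P' = 0)
    (h2 : C + τ * A + E * B = 0) :
    x' = S / A + τ * P' / (-B) - C / (-A) * (P' / (-B)) := by
  have h : x' = (S * B - τ * A * P' - C * P') / (A * B) := by
    rw [eq_div_iff (mul_ne_zero hA hB)]
    linear_combination (-B) * h1 + P' * h2
  rw [h, div_neg, div_neg]; field_simp; ring

lemma keyT' (A B C τ Bnum : ℝ) (hA : A ≠ 0) (hB : B ≠ 0) (h : Bnum = B) :
    C / A + τ * Bnum / (-B) - C / (-A) * (Bnum / (-B)) = -τ := by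
  subst h; field_simp; ring

lemma keyS' (A B S P' C τ Anum : ℝ) (hA : A ≠ 0) (hB : B ≠ 0) (h : Anum = A) :
    S - (S / A + τ * P' / (-B) - C / (-A) * (P' / (-B))) * Anum
      + (τ * Anum / (-B) - C / (-A) * (Anum / (-B))) * P' = 0 := by
  subst h; field_simp; ring

set_option maxHeartbeats 1000000 in

/-- **The SSC position observable is the unique intersection of the SSC worldline with a
spacelike hyperplane**: `χ(u,τ)` is the unique `x ∈ ℝ⁴` with `η(u,x) = −τ` and
`(J_{μν} − x_μP_ν + x_νP_μ)f^ν = 0` for all `μ`. -/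
theorem sscPos_unique_intersection
    (P : Fin 4 → ℝ) (hP : FDTimelike P)
    (J : Fin 4 → Fin 4 → ℝ) (hJ : ∀ μ ν, J μ ν = -J ν μ)
    (f : Fin 4 → ℝ) (hf : FDTimelike f)
    (u : Fin 4 → ℝ) (hu : FDUnitTimelike u) (τ : ℝ) :
    (mink u (sscPos J P f u τ) = -τ ∧ SSC J P (sscPos J P f u τ) f) ∧
    (∀ x : Fin 4 → ℝ, mink u x = -τ → SSC J P x f → x = sscPos J P f u τ) := by
  obtain ⟨hPt, hP0⟩ := hP
  obtain ⟨hft, hf0⟩ := hf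
  obtain ⟨huu, hu0⟩ := hu
  have hut : mink u u < 0 := by rw [huu]; norm_num
  have hfP : mink f P < 0 := mink_neg' f P hft hf0 hPt hP0
  have huP : mink u P < 0 := mink_neg' u P hut hu0 hPt hP0
  have hA : mink f P ≠ 0 := ne_of_lt hfP
  have hB : mink u P ≠ 0 := ne_of_lt huP
  have h00 : J 0 0 = 0 := by have := hJ 0 0; linarith
  have h11 : J 1 1 = 0 := by have := hJ 1 1; linarith
  have h22 : J 2 2 = 0 := by have := hJ 2 2; linarith
  have h33 : J 3 3 = 0 := by have := hJ 3 3; linarith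
  have h10 : J 1 0 = -J 0 1 := hJ 1 0
  have h20 : J 2 0 = -J 0 2 := hJ 2 0
  have h30 : J 3 0 = -J 0 3 := hJ 3 0
  have h21 : J 2 1 = -J 1 2 := hJ 2 1
  have h31 : J 3 1 = -J 1 3 := hJ 3 1
  have h32 : J 3 2 = -J 2 3 := hJ 3 2
  refine ⟨⟨?_, ?_⟩, ?_⟩
  · have h := keyT' (mink f P) (mink u P) (∑ l, ∑ ρ, J l ρ * u l * f ρ) τ
      (-(u 0 * P 0) + u 1 * P 1 + u 2 * P 2 + u 3 * P 3) hA hB rfl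
    simp only [Fin.sum_univ_four] at h
    show -(u 0 * (sscPos J P f u τ) 0) + u 1 * (sscPos J P f u τ) 1
        + u 2 * (sscPos J P f u τ) 2 + u 3 * (sscPos J P f u τ) 3 = -τ
    simp only [sscPos, low_zero', low_one', low_two', low_three', sscPosLow,
      Fin.sum_univ_four]
    linear_combination h
  · have Aexp : -(f 0 * P 0) + f 1 * P 1 + f 2 * P 2 + f 3 * P 3 = mink f P := rfl
    intro μ
    have h := keyS' (mink f P) (mink u P) (∑ ρ, J μ ρ * f ρ) (low P μ)
      (∑ l, ∑ ρ, J l ρ * u l * f ρ) τ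
      (-(f 0 * P 0) + f 1 * P 1 + f 2 * P 2 + f 3 * P 3) hA hB Aexp
    simp only [Fin.sum_univ_four] at h
    simp only [spinTensor, sscPos, low_low', Fin.sum_univ_four,
      low_zero', low_one', low_two', low_three', sscPosLow] at h ⊢
    simp only [h00, h11, h22, h33, h10, h20, h30, h21, h31, h32] at h ⊢
    linear_combination h
  · intro x hx hssc
    have hx' : -(u 0 * x 0) + u 1 * x 1 + u 2 * x 2 + u 3 * x 3 = -τ := hx
    have g0 := hssc 0
    have g1 := hssc 1
    have g2 := hssc 2
    have g3 := hssc 3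
    simp only [spinTensor, Fin.sum_univ_four, low_zero', low_one', low_two', low_three']
      at g0 g1 g2 g3
    have h2' : (∑ l, ∑ ρ, J l ρ * u l * f ρ) + τ * mink f P + mink x f * mink u P = 0 := by
      simp only [Fin.sum_univ_four, mink]
      linear_combination u 0 * g0 + u 1 * g1 + u 2 * g2 + u 3 * g3 +
        (-(f 0 * P 0) + f 1 * P 1 + f 2 * P 2 + f 3 * P 3) * hx'
    have hlow : low x = sscPosLow J P f u τ := by
      funext μ
      have h1 : (∑ ρ, J μ ρ * f ρ) - low x μ * mink f P + mink x f * low P μ = 0 := by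
        have g := hssc μ
        simp only [spinTensor, Fin.sum_univ_four, low_zero', low_one', low_two',
          low_three'] at g
        simp only [Fin.sum_univ_four, mink]
        linear_combination g
      exact key' (mink f P) (mink u P) _ (low P μ) _ τ (low x μ) (mink x f) hA hB h1 h2'
    show x = low (sscPosLow J P f u τ)
    rw [← hlow, low_low']
end
end
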